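/- Let α : (R,∘,ℓ,r) → A be an O-operator on the algebra R of weight λ and f : A → A a k-algebra automorphism. Then (R, ∘, ℓ∘f⁻¹, r∘f⁻¹) is an A-bimodule k-algebra and f∘α : R → A is an O-operator on this algebra of weight λ. -/

import Mathlib

/-! Transporting along an algebra isomorphism `f` preserves every identity in sight: the twisted
actions `ℓ ∘ f⁻¹`, `r ∘ f⁻¹` satisfy the bimodule axioms because `f⁻¹` is again multiplicative, and
the O-operator identity for `f ∘ α` is the image under `f` of the one for `α`, since
`ℓ (f⁻¹ (f (α u))) = ℓ (α u)`. -/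

section OOperator

variable {k A B R : Type*} [CommSemiring k] [AddCommMonoid A] [Module k A]
  [AddCommMonoid B] [Module k B] [AddCommMonoid R] [Module k R]

theorem LinearEquiv.symm_map_mul {mulA : A →ₗ[k] A →ₗ[k] A} {mulB : B →ₗ[k] B →ₗ[k] B}
    (f : A ≃ₗ[k] B) (hf : ∀ x y : A, f (mulA x y) = mulB (f x) (f y)) (x y : B) :
    f.symm (mulB x y) = mulA (f.symm x) (f.symm y) :=
  f.injective <| by rw [f.apply_symm_apply, hf, f.apply_symm_apply, f.apply_symm_apply]

def IsOOperator (mulA : A →ₗ[k] A →ₗ[k] A) (mulR : R →ₗ[k] R →ₗ[k] R)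
    (l r : A →ₗ[k] Module.End k R) (lam : k) (α : R →ₗ[k] A) : Prop :=
  ∀ u v : R, mulA (α u) (α v) = α (l (α u) v) + α (r (α v) u) + lam • α (mulR u v)

theorem IsOOperator.comp_linearEquiv {mulA : A →ₗ[k] A →ₗ[k] A} {mulB : B →ₗ[k] B →ₗ[k] B}
    {mulR : R →ₗ[k] R →ₗ[k] R} {l r : A →ₗ[k] Module.End k R} {lam : k} {α : R →ₗ[k] A}
    (hα : IsOOperator mulA mulR l r lam α)
    (f : A ≃ₗ[k] B) (hf : ∀ x y : A, f (mulA x y) = mulB (f x) (f y)) :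
    IsOOperator mulB mulR (l ∘ₗ f.symm.toLinearMap) (r ∘ₗ f.symm.toLinearMap) lam
      (f.toLinearMap ∘ₗ α) := by
  intro u v
  simp only [LinearMap.coe_comp, LinearEquiv.coe_coe, Function.comp_apply,
    LinearEquiv.symm_apply_apply]
  rw [← hf, hα, map_add, map_add, map_smul]

end OOperator

theorem twisted_O_operator_by_automorphism_general
    (k : Type*) [CommRing k]
    (A : Type*) [AddCommGroup A] [Module k A]
    (R : Type*) [AddCommGroup R] [Module k R]
    (mulA : A →ₗ[k] A →ₗ[k] A)
    (mulR : R →ₗ[k] R →ₗ[k] R)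
    (l r : A →ₗ[k] Module.End k R)
    (hl : ∀ x y : A, ∀ v : R, l (mulA x y) v = l x (l y v))
    (hr : ∀ x y : A, ∀ v : R, r (mulA x y) v = r y (r x v))
    (hlr : ∀ x y : A, ∀ v : R, r y (l x v) = l x (r y v))
    (hc1 : ∀ x : A, ∀ v w : R, l x (mulR v w) = mulR (l x v) w)
    (hc2 : ∀ x : A, ∀ v w : R, r x (mulR v w) = mulR v (r x w))
    (hc3 : ∀ x : A, ∀ v w : R, mulR (r x v) w = mulR v (l x w))
    (lam : k) (α : R →ₗ[k] A)
    (hα : ∀ u v : R,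
      mulA (α u) (α v)
        = α (l (α u) v) + α (r (α v) u) + lam • α (mulR u v))
    -- f is a k-algebra automorphism of (A,*)
    (f : A ≃ₗ[k] A)
    (hf : ∀ x y : A, f (mulA x y) = mulA (f x) (f y)) :
    -- (R, ∘, ℓ∘f⁻¹, r∘f⁻¹) is an A-bimodule k-algebra:
    (∀ x y : A, ∀ v : R,
      l (f.symm (mulA x y)) v = l (f.symm x) (l (f.symm y) v)) ∧
    (∀ x y : A, ∀ v : R,
      r (f.symm (mulA x y)) v = r (f.symm y) (r (f.symm x) v)) ∧
    (∀ x y : A, ∀ v : R,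
      r (f.symm y) (l (f.symm x) v) = l (f.symm x) (r (f.symm y) v)) ∧
    (∀ x : A, ∀ v w : R, l (f.symm x) (mulR v w) = mulR (l (f.symm x) v) w) ∧
    (∀ x : A, ∀ v w : R, r (f.symm x) (mulR v w) = mulR v (r (f.symm x) w)) ∧
    (∀ x : A, ∀ v w : R, mulR (r (f.symm x) v) w = mulR v (l (f.symm x) w)) ∧
    -- f ∘ α is an O-operator on this A-bimodule k-algebra of weight λ
    (∀ u v : R,
      mulA (f (α u)) (f (α v))
        = f (α (l (f.symm (f (α u))) v))
          + f (α (r (f.symm (f (α v))) u))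
          + lam • f (α (mulR u v))) := by
  have hf_symm := f.symm_map_mul hf
  refine ⟨fun x y v => ?_, fun x y v => ?_, fun x y v => hlr _ _ v, fun x => hc1 _,
    fun x => hc2 _, fun x => hc3 _, IsOOperator.comp_linearEquiv hα f hf⟩
  · rw [hf_symm, hl]
  · rw [hf_symm, hr]

/-- If α : R → A is an O-operator on the algebra (R,∘,ℓ,r) of
weight λ and f : A → A is a k-algebra automorphism, then (R,∘,ℓf⁻¹,rf⁻¹) is an
A-bimodule k-algebra and f ∘ α is an O-operator on it of weight λ. -/
theorem twisted_O_operator_by_automorphism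
    (k : Type*) [CommRing k]
    (A : Type*) [AddCommGroup A] [Module k A]
    (R : Type*) [AddCommGroup R] [Module k R]
    (mulA : A →ₗ[k] A →ₗ[k] A)
    (mulA_assoc : ∀ x y z : A, mulA (mulA x y) z = mulA x (mulA y z))
    (mulR : R →ₗ[k] R →ₗ[k] R)
    (mulR_assoc : ∀ u v w : R, mulR (mulR u v) w = mulR u (mulR v w))
    (l r : A →ₗ[k] Module.End k R)
    (hl : ∀ x y : A, ∀ v : R, l (mulA x y) v = l x (l y v))
    (hr : ∀ x y : A, ∀ v : R, r (mulA x y) v = r y (r x v))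
    (hlr : ∀ x y : A, ∀ v : R, r y (l x v) = l x (r y v))
    (hc1 : ∀ x : A, ∀ v w : R, l x (mulR v w) = mulR (l x v) w)
    (hc2 : ∀ x : A, ∀ v w : R, r x (mulR v w) = mulR v (r x w))
    (hc3 : ∀ x : A, ∀ v w : R, mulR (r x v) w = mulR v (l x w))
    (lam : k) (α : R →ₗ[k] A)
    (hα : ∀ u v : R,
      mulA (α u) (α v)
        = α (l (α u) v) + α (r (α v) u) + lam • α (mulR u v))
    -- f is a k-algebra automorphism of (A,*)
    (f : A ≃ₗ[k] A)
    (hf : ∀ x y : A, f (mulA x y) = mulA (f x) (f y)) :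
    -- (R, ∘, ℓ∘f⁻¹, r∘f⁻¹) is an A-bimodule k-algebra:
    (∀ x y : A, ∀ v : R,
      l (f.symm (mulA x y)) v = l (f.symm x) (l (f.symm y) v)) ∧
    (∀ x y : A, ∀ v : R,
      r (f.symm (mulA x y)) v = r (f.symm y) (r (f.symm x) v)) ∧
    (∀ x y : A, ∀ v : R,
      r (f.symm y) (l (f.symm x) v) = l (f.symm x) (r (f.symm y) v)) ∧
    (∀ x : A, ∀ v w : R, l (f.symm x) (mulR v w) = mulR (l (f.symm x) v) w) ∧
    (∀ x : A, ∀ v w : R, r (f.symm x) (mulR v w) = mulR v (r (f.symm x) w)) ∧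
    (∀ x : A, ∀ v w : R, mulR (r (f.symm x) v) w = mulR v (l (f.symm x) w)) ∧
    -- f ∘ α is an O-operator on this A-bimodule k-algebra of weight λ
    (∀ u v : R,
      mulA (f (α u)) (f (α v))
        = f (α (l (f.symm (f (α u))) v))
          + f (α (r (f.symm (f (α v))) u))
          + lam • f (α (mulR u v))) :=
  twisted_O_operator_by_automorphism_general k A R mulA mulR l r hl hr hlr hc1 hc2 hc3 lam α hα f hf
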